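/- Let m,n∈ℕ with m≥n and let 0<t<1. Then F_{m,n}(t) ≤ (1/(1−t))·(t/(1−t))^n·exp((1−t)/t)·m^n. -/

import Mathlib

open scoped BigOperators ENNReal
open Finset

noncomputable section

namespace Smolyak

/-- `f` is 1-periodic in each of its `d` variables. -/
def Periodic1 {d : ℕ} (f : (Fin d → ℝ) → ℝ) : Prop :=
  ∀ (x : Fin d → ℝ) (i : Fin d), f (Function.update x i (x i + 1)) = f x

/-- sup-norm of a function on the torus. -/
def supNorm {d : ℕ} (f : (Fin d → ℝ) → ℝ) : ℝ := ⨆ x, |f x|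

/-- `L_p` norm (over the unit cube) for `0<p≤∞`. -/
def pNorm (d : ℕ) (p : ℝ≥0∞) (f : (Fin d → ℝ) → ℝ) : ℝ :=
  if p = ∞ then supNorm f
  else (∫ x in Set.Icc (0 : Fin d → ℝ) 1, |f x| ^ p.toReal) ^ (1 / p.toReal)

/-- `(p+1)^{1/p}`, with the convention that it equals `1` for `p = ∞`. -/
def pfac (p : ℝ≥0∞) : ℝ := if p = ∞ then 1 else (p.toReal + 1) ^ (1 / p.toReal)

/-- `[r(p+1)]^{-1/p}`, with the convention that it equals `1` for `p = ∞`. -/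
def rpfac (r : ℕ) (p : ℝ≥0∞) : ℝ :=
  if p = ∞ then 1 else ((r : ℝ) * (p.toReal + 1)) ^ (-(1 / p.toReal))

/-- the mixed `(l,u)`-th difference operator `Δ_h^{l,u}`. -/
def deltaMix (d l : ℕ) (u : Finset (Fin d)) (h : Fin d → ℝ)
    (f : (Fin d → ℝ) → ℝ) (x : Fin d → ℝ) : ℝ :=
  ∑ j ∈ Fintype.piFinset (fun i => Finset.range (if i ∈ u then l + 1 else 1)),
    (∏ i ∈ u, ((-1 : ℝ) ^ (l - j i) * (l.choose (j i) : ℝ))) *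
      f (fun i => x i + (j i : ℝ) * h i)

/-- the Hölder–Lipschitz mixed seminorm `|f|_{H^α(u)}` (difference order `l`). -/
def holderSemi (d l : ℕ) (α : ℝ) (u : Finset (Fin d)) (f : (Fin d → ℝ) → ℝ) : ℝ :=
  ⨆ h : {h : Fin d → ℝ // ∀ i, h i ∈ Set.Ioc (0:ℝ) 1},
    (∏ i ∈ u, (h.1 i) ^ (-α)) * supNorm (deltaMix d l u h.1 f)

/-- membership in the unit ball `U^α_∞` of `H^α` (difference order `l`):
continuous, 1-periodic, and all the seminorm quotients are `≤ 1`. -/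
def memU (d l : ℕ) (α : ℝ) (f : (Fin d → ℝ) → ℝ) : Prop :=
  Continuous f ∧ Periodic1 f ∧
    ∀ (u : Finset (Fin d)) (h : Fin d → ℝ), (∀ i, h i ∈ Set.Ioc (0:ℝ) 1) →
      ∀ x, (∏ i ∈ u, (h i) ^ (-α)) * |deltaMix d l u h f x| ≤ 1

/-- the class `U^{α,s}_∞`: unit ball with zero boundary values. -/
def Us (d : ℕ) (α : ℝ) : Set ((Fin d → ℝ) → ℝ) :=
  {f | memU d 2 α f ∧ ∀ x : Fin d → ℝ, (∃ j : Fin d, ∃ z : ℤ, x j = (z : ℝ)) → f x = 0}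

/-- the `j`-th variable is active for `f`. -/
def ActiveVar {d : ℕ} (f : (Fin d → ℝ) → ℝ) (j : Fin d) : Prop :=
  ∃ x t, f (Function.update x j t) ≠ f x

/-- the class `U^{α,ν}_∞` (difference order `l`): members of the unit ball with
at most `ν` active variables. -/
def UnuL (d l : ℕ) (α : ℝ) (ν : ℕ) : Set ((Fin d → ℝ) → ℝ) :=
  {f | memU d l α f ∧ ∃ u : Finset (Fin d), u.card ≤ ν ∧ ∀ j, ActiveVar f j → j ∈ u}

/-- `U^{α,ν}_∞` for smoothness `α ≤ 2` (order-2 differences). -/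
def Unu (d : ℕ) (α : ℝ) (ν : ℕ) : Set ((Fin d → ℝ) → ℝ) := UnuL d 2 α ν

/-! ### Faber system -/

/-- the hat function `M_2` with knots `0,1,2`. -/
def hatM (x : ℝ) : ℝ := max 0 (1 - |x - 1|)

/-- univariate periodic Faber hat `φ_{k,s}`. -/
def phi1 (k s : ℕ) (x : ℝ) : ℝ :=
  if k = 0 then 1 else hatM (2 ^ k * Int.fract x - 2 * s)

/-- support of a multi-index. -/
def suppK {d : ℕ} (k : Fin d → ℕ) : Finset (Fin d) :=
  Finset.univ.filter fun i => k i ≠ 0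

/-- the Faber coefficient functional `λ_{k,s}(f)` (coordinatewise composition of
`f ↦ f(0)` for `k_i = 0` and `f ↦ -½Δ²_{2^{-k_i}}(f, 2^{-k_i+1}s_i)` for `k_i ≥ 1`). -/
def lamF (d : ℕ) (k s : Fin d → ℕ) (f : (Fin d → ℝ) → ℝ) : ℝ :=
  (-(1/2) : ℝ) ^ (suppK k).card *
    deltaMix d 2 (suppK k) (fun i => (2:ℝ) ^ (-(k i : ℤ))) f
      (fun i => if k i = 0 then 0 else (2:ℝ) ^ (-(k i : ℤ) + 1) * (s i : ℝ))

/-- the Faber block `q_k(f) = Σ_{s∈Z^d(k)} λ_{k,s}(f) φ_{k,s}`. -/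
def qF (d : ℕ) (k : Fin d → ℕ) (f : (Fin d → ℝ) → ℝ) (x : Fin d → ℝ) : ℝ :=
  ∑ s ∈ Fintype.piFinset (fun i => Finset.range (2 ^ (k i - 1))),
    lamF d k s f * ∏ i, phi1 (k i) (s i) (x i)

/-- the index set `{k ∈ ℕ^d : |k|₁ = m}` (all `k_i ≥ 1`). -/
def kSetRing (d m : ℕ) : Finset (Fin d → ℕ) :=
  (Fintype.piFinset fun _ : Fin d => Finset.Icc 1 m).filter fun k => ∑ i, k i = m

/-- the operator `R̊_m(f) = Σ_{k∈ℕ^d, |k|₁≤m} q_k(f)`. -/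
def RringOp (d m : ℕ) (f : (Fin d → ℝ) → ℝ) (x : Fin d → ℝ) : ℝ :=
  ∑ k ∈ (Fintype.piFinset fun _ : Fin d => Finset.Icc 1 m).filter (fun k => ∑ i, k i ≤ m),
    qF d k f x

/-- the operator `R^ν_m(f) = Σ_{k∈ℤ₊^d, |supp k|≤ν, |k|₁≤m} q_k(f)`. -/
def RnuOp (d m ν : ℕ) (f : (Fin d → ℝ) → ℝ) (x : Fin d → ℝ) : ℝ :=
  ∑ k ∈ (Fintype.piFinset fun _ : Fin d => Finset.range (m+1)).filter
      (fun k => ∑ i, k i ≤ m ∧ (suppK k).card ≤ ν),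
    qF d k f x

/-- the dyadic point `2^{-k}s`. -/
def toPoint (d : ℕ) (ks : (Fin d → ℕ) × (Fin d → ℕ)) : Fin d → ℝ :=
  fun i => (ks.2 i : ℝ) / 2 ^ (ks.1 i)

/-- the (interior) Smolyak grid `G̊(m)`. -/
def ringGrid (d m : ℕ) : Finset (Fin d → ℝ) :=
  (((Fintype.piFinset fun _ : Fin d => Finset.Icc 1 m) ×ˢ
      (Fintype.piFinset fun _ : Fin d => Finset.range (2 ^ m))).filter
    fun ks => (∑ i, ks.1 i = m) ∧ ∀ i, 1 ≤ ks.2 i ∧ ks.2 i < 2 ^ ks.1 i).image (toPoint d)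

/-- the Smolyak grid `G^ν(m)`. -/
def nuGrid (d m ν : ℕ) : Finset (Fin d → ℝ) :=
  (((Fintype.piFinset fun _ : Fin d => Finset.range (m+1)) ×ˢ
      (Fintype.piFinset fun _ : Fin d => Finset.range (2 ^ m))).filter
    fun ks => (∑ i, ks.1 i = m) ∧ (suppK ks.1).card ≤ ν ∧ ∀ i, ks.2 i < 2 ^ ks.1 i).image (toPoint d)

/-- the quantity of optimal sampling recovery on the grid `G` w.r.t. the class `F`. -/
def recErr (d : ℕ) (p : ℝ≥0∞) (G : Finset (Fin d → ℝ)) (F : Set ((Fin d → ℝ) → ℝ)) : ℝ≥0∞ :=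
  ⨅ Φ : (Fin d → ℝ) → (Fin d → ℝ) → ℝ,
    ⨆ f ∈ F, ENNReal.ofReal (pNorm d p (fun x => f x - ∑ ξ ∈ G, f ξ * Φ ξ x))

/-- the quantity of optimal cubature on the grid `G` w.r.t. the class `F`. -/
def cubErr (d : ℕ) (G : Finset (Fin d → ℝ)) (F : Set ((Fin d → ℝ) → ℝ)) : ℝ≥0∞ :=
  ⨅ w : (Fin d → ℝ) → ℝ,
    ⨆ f ∈ F, ENNReal.ofReal |(∫ x in Set.Icc (0 : Fin d → ℝ) 1, f x) - ∑ ξ ∈ G, w ξ * f ξ|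

/-! ### auxiliary quantities -/

/-- `F_{m,n}(t) = Σ_{s≥0} binom(m+s,n) t^s`. -/
def Fser (m n : ℕ) (t : ℝ) : ℝ := ∑' s : ℕ, ((m + s).choose n : ℝ) * t ^ s

/-- the function `b_n(t)`. -/
def bfun (n : ℕ) (t : ℝ) : ℝ :=
  if t < 1/2 then (1 - 2*t)⁻¹
  else if t = 1/2 then 2*((n : ℝ)+1)
  else (2*t - 1)⁻¹ * (t/(1-t))^(n+1)

/-- `β(l,m)`. -/
def beta (α : ℝ) (l m : ℕ) : ℝ :=
  if l = 0 then 1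
  else (((2:ℝ) ^ α - 1)⁻¹) ^ l * ∑ s ∈ Finset.range l, (m.choose s : ℝ) * ((2:ℝ) ^ α - 1) ^ s

/-- `|2^α - 2|^{-|sgn(α-1)|}`. -/
def sgnfac (α : ℝ) : ℝ := if α = 1 then 1 else |(2:ℝ) ^ α - 2|⁻¹

/-- the case distinction factor `κ`: `1` for `α>1`, `d` for `α=1`, `(2^α-1)^{-d}` for `α<1`. -/
def kap (α : ℝ) (d : ℕ) : ℝ :=
  if 1 < α then 1 else if α = 1 then (d : ℝ) else (((2:ℝ) ^ α - 1)⁻¹) ^ d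

/-- the constant `å(d)`. -/
def aring (α : ℝ) (p : ℝ≥0∞) (d : ℕ) : ℝ := sgnfac α * ((2 * pfac p)⁻¹) ^ d * kap α d

/-- the constant `a(ν)`. -/
def anu (α : ℝ) (p : ℝ≥0∞) (ν : ℕ) : ℝ := sgnfac α * (1 + (2 * pfac p)⁻¹) ^ ν * kap α ν

/-- `γ(ν,m)`. -/
def gammaB (α : ℝ) (p : ℝ≥0∞) (ν m : ℕ) : ℝ :=
  ∑ l ∈ Finset.range (ν+1), (ν.choose l : ℝ) * ((2 * pfac p)⁻¹) ^ l * beta α l m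

/-- `γ'(ν,m)`. -/
def gammaP (α : ℝ) (ν m : ℕ) : ℝ :=
  ∑ l ∈ Finset.Icc 1 ν, (ν.choose l : ℝ) * ((128:ℝ)⁻¹) ^ l * beta α l m

/-! ### B-splines and quasi-interpolation -/

/-- the cardinal B-spline `M_ℓ` of order `ℓ` (supported on `[0,ℓ]`); `Msp 0 = 0` by convention. -/
def Msp : ℕ → ℝ → ℝ
  | 0, _ => 0
  | 1, x => if 0 ≤ x ∧ x < 1 then 1 else 0
  | (n+2), x => ∫ t in (0:ℝ)..1, Msp (n+1) (x - t)

/-- `g_{k,s}`: periodized scaled cubic B-spline. -/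
def gks (k s : ℕ) (x : ℝ) : ℝ := Msp 4 (2 ^ (k + 2) * Int.fract x - 4 * s)

/-- the fooling function `f_{m,n}`. -/
def fmnFun (d : ℕ) (α : ℝ) (m n : ℕ) (x : Fin d → ℝ) : ℝ :=
  ((2:ℝ) ^ (5 * d))⁻¹ * ∑ l ∈ Finset.Icc m n, (2:ℝ) ^ (-(α * (l : ℝ))) *
    ∑ k ∈ kSetRing d l, ∑ s ∈ Fintype.piFinset (fun i => Finset.range (2 ^ k i)),
      ∏ j, gks (k j) (s j) (x j)

/-- the mesh size `h^{(k)} = (2r)^{-1} 2^{-k}` (allowing integer levels). -/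
def hkmesh (r : ℕ) (t : ℤ) : ℝ := ((2 * r : ℕ) : ℝ)⁻¹ * (2:ℝ) ^ (-t)

/-- the sequence `Λ` is even and supported on `|j| ≤ μ`. -/
def EvenSeq (μ : ℕ) (lam : ℤ → ℝ) : Prop :=
  (∀ j, lam (-j) = lam j) ∧ ∀ j : ℤ, (μ : ℤ) < |j| → lam j = 0

/-- the univariate operator `Q` built from `M_{2r}` and `Λ` reproduces all polynomials
of degree at most `2r - 1`. -/
def Reproduces (r μ : ℕ) (lam : ℤ → ℝ) : Prop :=
  ∀ g : Polynomial ℝ, g.natDegree < 2 * r → ∀ x : ℝ,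
    (∑' s : ℤ, (∑ j ∈ Finset.Icc (-(μ:ℤ)) (μ:ℤ), lam j * g.eval ((s:ℝ) - (j:ℝ) + (r:ℝ))) *
      Msp (2*r) (x - (s:ℝ))) = g.eval x

/-- the tensor-product quasi-interpolation operator `∏_i Q_{t_i}` for 1-periodic functions
(equal to `0` whenever some level `t_i = -1`). -/
def Qmulti (d r μ : ℕ) (lam : ℤ → ℝ) (t : Fin d → ℤ) (f : (Fin d → ℝ) → ℝ)
    (x : Fin d → ℝ) : ℝ :=
  if ∀ i, 0 ≤ t i then
    ∑' s : Fin d → ℤ,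
      (∑ j ∈ Fintype.piFinset (fun _ : Fin d => Finset.Icc (-(μ:ℤ)) (μ:ℤ)),
        (∏ i, lam (j i)) * f (fun i => hkmesh r (t i) * ((s i : ℝ) - (j i : ℝ) + (r:ℝ))))
      * ∏ i, Msp (2*r) (x i / hkmesh r (t i) - (s i : ℝ))
  else 0

/-- the mixed dyadic block `q_k = ∏_i (Q_{k_i} - Q_{k_i - 1})`. -/
def qsp (d r μ : ℕ) (lam : ℤ → ℝ) (k : Fin d → ℕ) (f : (Fin d → ℝ) → ℝ)
    (x : Fin d → ℝ) : ℝ :=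
  ∑ v : Finset (Fin d), (-1:ℝ) ^ v.card *
    Qmulti d r μ lam (fun i => if i ∈ v then (k i : ℤ) - 1 else (k i : ℤ)) f x

/-- the operator `R^ν_m` built from the B-spline quasi-interpolation blocks. -/
def RnuSp (d r μ : ℕ) (lam : ℤ → ℝ) (m ν : ℕ) (f : (Fin d → ℝ) → ℝ)
    (x : Fin d → ℝ) : ℝ :=
  ∑ k ∈ (Fintype.piFinset fun _ : Fin d => Finset.range (m+1)).filter
      (fun k => ∑ i, k i ≤ m ∧ (suppK k).card ≤ ν),
    qsp d r μ lam k f x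

/-- the symbol `P_Λ(z) = z^r Σ_j λ(j) z^j`. -/
def PLam (r μ : ℕ) (lam : ℤ → ℝ) : LaurentPolynomial ℝ :=
  LaurentPolynomial.T (r : ℤ) *
    ∑ j ∈ Finset.Icc (-(μ:ℤ)) (μ:ℤ), LaurentPolynomial.C (lam j) * LaurentPolynomial.T j

/-- `P_Λ(z²)`. -/
def PLam2 (r μ : ℕ) (lam : ℤ → ℝ) : LaurentPolynomial ℝ :=
  LaurentPolynomial.T (2 * r : ℤ) *
    ∑ j ∈ Finset.Icc (-(μ:ℤ)) (μ:ℤ), LaurentPolynomial.C (lam j) * LaurentPolynomial.T (2*j)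

/-- `P_even(z) := P_Λ(z) − 2^{−2r+1} P_Λ(z²) Σ_{j=0}^{r} binom(2r,2j) z^{−2j}`. -/
def Peven (r μ : ℕ) (lam : ℤ → ℝ) : LaurentPolynomial ℝ :=
  PLam r μ lam - LaurentPolynomial.C (((2:ℝ) ^ (2*r-1))⁻¹) * PLam2 r μ lam *
    ∑ j ∈ Finset.range (r+1),
      LaurentPolynomial.C (((2*r).choose (2*j) : ℝ)) * LaurentPolynomial.T (-(2*(j:ℤ)))

/-- `P_odd(z) := P_Λ(z) − 2^{−2r+1} P_Λ(z²) Σ_{j=0}^{r−1} binom(2r,2j+1) z^{−2j−1}`. -/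
def Podd (r μ : ℕ) (lam : ℤ → ℝ) : LaurentPolynomial ℝ :=
  PLam r μ lam - LaurentPolynomial.C (((2:ℝ) ^ (2*r-1))⁻¹) * PLam2 r μ lam *
    ∑ j ∈ Finset.range r,
      LaurentPolynomial.C (((2*r).choose (2*j+1) : ℝ)) * LaurentPolynomial.T (-(2*(j:ℤ)+1))

/-- the norm `‖P‖ = Σ |coefficients|` of a Laurent polynomial. -/
def lpNorm (P : LaurentPolynomial ℝ) : ℝ := ∑ n ∈ P.coeff.support, |P.coeff n|

/-- `b = ‖L_Λ‖_{C(𝕋)} = sup_x |Σ_{s∈ℤ} Σ_{|j|≤μ} λ(j) M_{2r}(x−j−s)|`. -/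
def bLam (r μ : ℕ) (lam : ℤ → ℝ) : ℝ :=
  ⨆ x : ℝ, |∑' s : ℤ, ∑ j ∈ Finset.Icc (-(μ:ℤ)) (μ:ℤ), lam j * Msp (2*r) (x - (j:ℝ) - (s:ℝ))|

/-- `δ(ν,a,b,m) = Σ_{l=0}^{ν} binom(ν,l) a^l b^{ν−l} β(l,m)`. -/
def deltaB (α : ℝ) (ν : ℕ) (a b : ℝ) (m : ℕ) : ℝ :=
  ∑ l ∈ Finset.range (ν+1), (ν.choose l : ℝ) * a ^ l * b ^ (ν - l) * beta α l m

/-- the constant `c(ν,a,b)`. -/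
def cB (α : ℝ) (ν : ℕ) (a b : ℝ) : ℝ :=
  sgnfac α *
    (if 1 < α then (a + b) ^ ν
     else if α = 1 then (ν : ℝ) * (a + b) ^ ν
     else (a / ((2:ℝ) ^ α - 1) + b) ^ ν)

/-- the case distinction factor for cubature: `(5/4)^ν`, `ν(5/4)^ν`, `[1+1/(4(2^α−1))]^ν`. -/
def kapInt (α : ℝ) (ν : ℕ) : ℝ :=
  if 1 < α then (5/4 : ℝ) ^ ν
  else if α = 1 then (ν : ℝ) * (5/4 : ℝ) ^ ν
  else (1 + (4 * ((2:ℝ) ^ α - 1))⁻¹) ^ ν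

/-!
Vandermonde's identity `C(m+s, n) = ∑ᵢ C(m, i) C(s, n-i)` and the series
`∑ₛ C(s, j) tˢ = tʲ / (1-t)^(j+1)` turn `F_{m,n}(t)` into the finite sum
`∑_{i ≤ n} C(m, i) t^(n-i) / (1-t)^(n-i+1)`. After `C(m, i) ≤ mⁿ / i!` and factoring out
`(1-t)⁻¹ (t/(1-t))ⁿ mⁿ`, what remains is a partial sum of the exponential series at `(1-t)/t`.
-/

section Series

variable {𝕜 : Type*} [NormedField 𝕜]

theorem hasSum_choose_mul_pow_of_norm_lt_one (j : ℕ) {t : 𝕜} (ht : ‖t‖ < 1) :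
    HasSum (fun s : ℕ => (s.choose j : 𝕜) * t ^ s) (t ^ j / (1 - t) ^ (j + 1)) := by
  rw [← hasSum_nat_add_iff' j]
  have h_low : ∑ s ∈ range j, (s.choose j : 𝕜) * t ^ s = 0 :=
    sum_eq_zero fun s hs => by rw [Nat.choose_eq_zero_of_lt (mem_range.mp hs)]; simp
  rw [h_low, sub_zero, div_eq_mul_one_div]
  have h_shift : (fun s => ((s + j).choose j : 𝕜) * t ^ (s + j)) =
      fun s => t ^ j * (((s + j).choose j : 𝕜) * t ^ s) := by
    funext s; ring
  rw [h_shift]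
  exact (hasSum_choose_mul_geometric_of_norm_lt_one j ht).mul_left (t ^ j)

theorem hasSum_add_choose_mul_pow (m n : ℕ) {t : 𝕜} (ht : ‖t‖ < 1) :
    HasSum (fun s : ℕ => ((m + s).choose n : 𝕜) * t ^ s)
      (∑ i ∈ range (n + 1), (m.choose i : 𝕜) * (t ^ (n - i) / (1 - t) ^ (n - i + 1))) := by
  have h_vandermonde : (fun s : ℕ => ((m + s).choose n : 𝕜) * t ^ s) =
      fun s => ∑ p ∈ antidiagonal n, (m.choose p.1 : 𝕜) * ((s.choose p.2 : 𝕜) * t ^ s) := by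
    funext s
    rw [Nat.add_choose_eq, Nat.cast_sum, sum_mul]
    refine sum_congr rfl fun p _ => ?_
    push_cast
    ring
  rw [h_vandermonde, ← Nat.sum_antidiagonal_eq_sum_range_succ
    (fun i j => (m.choose i : 𝕜) * (t ^ j / (1 - t) ^ (j + 1)))]
  exact hasSum_sum fun p _ =>
    (hasSum_choose_mul_pow_of_norm_lt_one p.2 ht).mul_left (m.choose p.1 : 𝕜)

end Series

theorem choose_le_pow_div_factorial {m n i : ℕ} (hin : i ≤ n) (hnm : n ≤ m) :
    (m.choose i : ℝ) ≤ (m : ℝ) ^ n / i.factorial := by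
  have hpow : (m : ℝ) ^ i ≤ (m : ℝ) ^ n := by
    rcases Nat.eq_zero_or_pos m with rfl | hm
    · obtain rfl : i = 0 := by omega
      obtain rfl : n = 0 := by omega
      rfl
    · exact pow_le_pow_right₀ (by exact_mod_cast hm) hin
  calc (m.choose i : ℝ) ≤ (m : ℝ) ^ i / i.factorial := Nat.choose_le_pow_div i m
    _ ≤ (m : ℝ) ^ n / i.factorial := by gcongr

theorem choose_mul_geometric_term_le {m n i : ℕ} (hin : i ≤ n) (hnm : n ≤ m) {t : ℝ}
    (ht0 : 0 < t) (ht1 : t < 1) :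
    (m.choose i : ℝ) * (t ^ (n - i) / (1 - t) ^ (n - i + 1)) ≤
      (1 - t)⁻¹ * (t / (1 - t)) ^ n * (m : ℝ) ^ n * (((1 - t) / t) ^ i / i.factorial) := by
  have h1t : 0 < 1 - t := by linarith
  have h_split : t ^ (n - i) / (1 - t) ^ (n - i + 1) =
      (1 - t)⁻¹ * (t / (1 - t)) ^ n * ((1 - t) / t) ^ i := by
    obtain ⟨k, rfl⟩ := Nat.exists_eq_add_of_le hin
    rw [Nat.add_sub_cancel_left]
    have ht0' := ht0.ne'
    have h1t' := h1t.ne'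
    rw [div_pow, div_pow]
    field_simp
    ring
  calc (m.choose i : ℝ) * (t ^ (n - i) / (1 - t) ^ (n - i + 1))
      ≤ (m : ℝ) ^ n / i.factorial * (t ^ (n - i) / (1 - t) ^ (n - i + 1)) := by
        gcongr
        exact choose_le_pow_div_factorial hin hnm
    _ = _ := by rw [h_split]; ring

theorem Fser_le_exp_general (m n : ℕ) (hmn : n ≤ m) (t : ℝ)
    (ht0 : 0 < t) (ht1 : t < 1) :
    Fser m n t ≤ (1 - t)⁻¹ * (t / (1 - t)) ^ n * Real.exp ((1 - t) / t) * (m : ℝ) ^ n := by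
  have ht : ‖t‖ < 1 := by rwa [Real.norm_of_nonneg ht0.le]
  have h1t : 0 < 1 - t := by linarith
  rw [Fser, (hasSum_add_choose_mul_pow m n ht).tsum_eq]
  calc ∑ i ∈ range (n + 1), (m.choose i : ℝ) * (t ^ (n - i) / (1 - t) ^ (n - i + 1))
      ≤ ∑ i ∈ range (n + 1), (1 - t)⁻¹ * (t / (1 - t)) ^ n * (m : ℝ) ^ n *
          (((1 - t) / t) ^ i / i.factorial) :=
        sum_le_sum fun i hi =>
          choose_mul_geometric_term_le (Nat.lt_succ_iff.mp (mem_range.mp hi)) hmn ht0 ht1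
    _ = (1 - t)⁻¹ * (t / (1 - t)) ^ n * (m : ℝ) ^ n *
          ∑ i ∈ range (n + 1), ((1 - t) / t) ^ i / i.factorial := by rw [mul_sum]
    _ ≤ (1 - t)⁻¹ * (t / (1 - t)) ^ n * (m : ℝ) ^ n * Real.exp ((1 - t) / t) := by
        gcongr
        exact Real.sum_le_exp_of_nonneg (by positivity) _
    _ = _ := by ring

/-- `F_{m,n}(t) ≤ (1−t)^{-1} (t/(1−t))^n e^{(1−t)/t} m^n`. -/
theorem Fser_le_exp (m n : ℕ) (hn : 1 ≤ n) (hmn : n ≤ m) (t : ℝ)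
    (ht0 : 0 < t) (ht1 : t < 1) :
    Fser m n t ≤ (1 - t)⁻¹ * (t / (1 - t)) ^ n * Real.exp ((1 - t) / t) * (m : ℝ) ^ n :=
  Fser_le_exp_general m n hmn t ht0 ht1

end Smolyak
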